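/- arXiv:1807.07129 — 6 statements merged into one kernel-verified Lean document; each statement's English description precedes it below -/
import Mathlib

section
/- Define Q(m) = ((4m−6)·(8m−20)!) / (3·2^{8m−21}·((4m−10)!)²) for integers m ≥ 4. Then Q(4) = 385/256 > 1, and Q(m+1)/Q(m) > 1 for all m ≥ 4; hence Q(m) > 1 for all m ≥ 4. -/
/-!
With `n = 4m - 10` one has `Q(m) = (2/3) (n + 4) C(2n, n) / 4ⁿ`, and passing from `m` to `m + 1`
replaces `n` by `n + 4`. Since `(n + 1) C(2n + 2, n + 1) = 2 (2n + 1) C(2n, n)`, the sequence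
`(n + c) C(2n, n) / 4ⁿ` increases exactly when `n + 1 > c`, so for `c = 4` it is strictly increasing
from `n = 4` on, and `Q(4) = 385/256`.
-/

/-- Q(m) = ((4m−6)·(8m−20)!) / (3·2^{8m−21}·((4m−10)!)²). -/
noncomputable def Qratio (m : ℕ) : ℝ :=
  ((4 * m - 6) * Nat.factorial (8 * m - 20) : ℝ)
    / (3 * 2 ^ (8 * m - 21) * ((Nat.factorial (4 * m - 10) : ℝ)) ^ 2)

open Nat

noncomputable def weightedCentralBinom (c : ℝ) (n : ℕ) : ℝ :=
  (n + c) * centralBinom n / 4 ^ n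

theorem weightedCentralBinom_succ_sub (c : ℝ) (n : ℕ) :
    weightedCentralBinom c (n + 1) - weightedCentralBinom c n
      = 2 * (n + 1 - c) * centralBinom n / ((n + 1) * 4 ^ (n + 1)) := by
  have hrec : ((n + 1 : ℝ)) * centralBinom (n + 1) = 2 * (2 * n + 1) * centralBinom n := by
    exact_mod_cast succ_mul_centralBinom_succ n
  have hsucc : (centralBinom (n + 1) : ℝ) = 2 * (2 * n + 1) * centralBinom n / (n + 1) := by
    rw [← hrec]; field_simp
  unfold weightedCentralBinom
  rw [hsucc]
  push_cast
  field_simp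
  ring

theorem weightedCentralBinom_lt_succ {c : ℝ} {n : ℕ} (hc : c < n + 1) :
    weightedCentralBinom c n < weightedCentralBinom c (n + 1) := by
  have hpos : (0 : ℝ) < centralBinom n := by exact_mod_cast centralBinom_pos n
  have hgap := sub_pos.2 hc
  rw [← sub_pos, weightedCentralBinom_succ_sub]
  positivity

theorem weightedCentralBinom_lt {c : ℝ} {a b : ℕ} (hc : c < a + 1) (hab : a < b) :
    weightedCentralBinom c a < weightedCentralBinom c b :=
  Nat.rel_of_forall_rel_succ_of_le_of_lt (· < ·) (f := weightedCentralBinom c)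
    (fun n han ↦ weightedCentralBinom_lt_succ (hc.trans_le (by exact_mod_cast succ_le_succ han)))
    le_rfl hab

theorem centralBinom_mul_factorial_mul_factorial (n : ℕ) :
    centralBinom n * n ! * n ! = (n + n)! := by
  rw [centralBinom_eq_two_mul_choose, two_mul, add_choose_mul_factorial_mul_factorial]

theorem Qratio_eq {m : ℕ} (hm : 3 ≤ m) :
    Qratio m = 2 / 3 * weightedCentralBinom 4 (4 * m - 10) := by
  obtain ⟨n, rfl⟩ := exists_add_of_le hm
  have hn : 4 * (3 + n) - 10 = 4 * n + 2 := by omega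
  have h2n : 8 * (3 + n) - 20 = (4 * n + 2) + (4 * n + 2) := by omega
  have hexp : 8 * (3 + n) - 21 = 8 * n + 3 := by omega
  have hfact : (((4 * n + 2) + (4 * n + 2))! : ℝ)
      = centralBinom (4 * n + 2) * (4 * n + 2)! * (4 * n + 2)! := by
    exact_mod_cast (centralBinom_mul_factorial_mul_factorial _).symm
  have hpow : (4 : ℝ) ^ (4 * n + 2) = 2 * 2 ^ (8 * n + 3) := by
    rw [show (4 : ℝ) = 2 ^ 2 by norm_num, ← pow_mul]; ring
  have hfact_ne : ((4 * n + 2)! : ℝ) ≠ 0 := by positivity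
  rw [Qratio, weightedCentralBinom, hn, h2n, hexp, hfact, hpow]
  push_cast
  field_simp
  ring

theorem Qratio_pos {m : ℕ} (hm : 3 ≤ m) : 0 < Qratio m := by
  rw [Qratio_eq hm, weightedCentralBinom]
  have := centralBinom_pos (4 * m - 10)
  positivity

theorem Qratio_strictMonoOn : StrictMonoOn Qratio (Set.Ici 4) := by
  intro m hm m' hm' hmm'
  rw [Set.mem_Ici] at hm hm'
  rw [Qratio_eq (by omega), Qratio_eq (by omega)]
  gcongr
  exact weightedCentralBinom_lt (by norm_cast; omega) (by omega)

/-- Q(4) = 385/256 > 1, Q(m+1)/Q(m) > 1 for all m ≥ 4, and hence Q(m) > 1 for all m ≥ 4. -/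
theorem stmt_5 :
    (Qratio 4 = 385 / 256 ∧ (1 : ℝ) < 385 / 256) ∧
    (∀ m : ℕ, 4 ≤ m → 1 < Qratio (m + 1) / Qratio m) ∧
    (∀ m : ℕ, 4 ≤ m → 1 < Qratio m) := by
  have hQ4 : Qratio 4 = 385 / 256 := by norm_num [Qratio, Nat.factorial]
  refine ⟨⟨hQ4, by norm_num⟩, fun m hm ↦ ?_, fun m hm ↦ ?_⟩
  · rw [one_lt_div (Qratio_pos (by omega))]
    exact Qratio_strictMonoOn hm (Set.mem_Ici.2 (by omega)) (lt_add_one m)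
  · calc (1 : ℝ) < Qratio 4 := by norm_num [hQ4]
      _ ≤ Qratio m := Qratio_strictMonoOn.monotoneOn Set.self_mem_Ici hm hm
end

section
/- Let P be a continuous function positive on (0,λ] and J(x) = sinh^{n₁}(x)·sinh^{n₂}(2x). Suppose u : ℝ → ℝ is C², even, strictly convex, u'(ℝ) = (−λ, λ), and u''(x)·P(u'(x)) = e^{−(t·u(x) + (1−t)·u_ref(x))}·J(x) for all x, where u_ref(x) = ln(e^{λx} + e^{−λx}) + C with C chosen so that ∫₀^∞ e^{−u_ref}J = ∫₀^λ P. If n₁ + 2n₂ < λ, then t < (λ − n₁ − 2n₂)/(λ − b̄) where b̄ = ∫₀^λ y P(y) dy / ∫₀^λ P(y) dy. -/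
open Real Set Filter Topology

/-!
Write `f = u'`, `v = t u + (1 - t) u_ref`, `N = n₁ + 2 n₂`, `A = ∫₀^λ P`, `B = ∫₀^λ y P(y) dy`,
and `G = e^{-v} J = f' P(f)`. Since `f(0) = 0`, the substitution `y = f(x)` turns `∫₀^R G` and
`∫₀^R f G` into `∫₀^{f R} P` and `∫₀^{f R} y P`, which tend to `A` and `B` because `f → λ`.
As `J' > N J` on `(0, ∞)` (this is `coth > 1`) and `v' ≤ t f + (1 - t) λ` (as `u_ref' < λ`),
`Ψ(R) = G(R) + t ∫₀^{f R} y P + ((1 - t) λ - N) ∫₀^{f R} P` is strictly increasing on `[0, ∞)`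
with `Ψ(0) ≥ 0`. Since `∫₀^∞ G` is finite, `G` cannot stay above `Ψ(1) / 2`, so the limit
`t B + ((1 - t) λ - N) A` of `Ψ - G` is positive, which rearranges to the bound on `t`.
-/

lemma hasDerivAt_log_exp_add_exp_neg (a x : ℝ) :
    HasDerivAt (fun x => log (exp (a * x) + exp (-(a * x)))) (a * tanh (a * x)) x := by
  have hpos : 0 < exp (a * x) + exp (-(a * x)) := by positivity
  have hlin := (hasDerivAt_id' x).const_mul a
  convert (hlin.exp.fun_add hlin.fun_neg.exp).log hpos.ne' using 1
  rw [tanh_eq_sinh_div_cosh, sinh_eq, cosh_eq]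
  field_simp
  ring

lemma hasDerivAt_sinh_mul_pow (n : ℕ) (a x : ℝ) :
    HasDerivAt (fun x => sinh (a * x) ^ n) (n * a * sinh (a * x) ^ (n - 1) * cosh (a * x)) x :=
  (((hasDerivAt_id' x).const_mul a).sinh.fun_pow n).congr_deriv (by ring)

lemma mul_sinh_mul_pow_le (n : ℕ) {a x : ℝ} (ha : 0 ≤ a) (hx : 0 ≤ x) :
    n * a * sinh (a * x) ^ n ≤ n * a * sinh (a * x) ^ (n - 1) * cosh (a * x) := by
  rcases n with _ | m
  · simp
  · have hs : 0 ≤ sinh (a * x) := sinh_nonneg_iff.2 (mul_nonneg ha hx)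
    rw [Nat.add_sub_cancel, pow_succ, ← mul_assoc]
    gcongr
    exact (sinh_lt_cosh _).le

lemma mul_sinh_mul_pow_lt {n : ℕ} (hn : 0 < n) {a x : ℝ} (ha : 0 < a) (hx : 0 < x) :
    n * a * sinh (a * x) ^ n < n * a * sinh (a * x) ^ (n - 1) * cosh (a * x) := by
  obtain ⟨m, rfl⟩ := Nat.exists_eq_add_of_lt hn
  have hs : 0 < sinh (a * x) := sinh_pos_iff.2 (mul_pos ha hx)
  rw [zero_add, Nat.add_sub_cancel, pow_succ, ← mul_assoc]
  gcongr
  exact sinh_lt_cosh _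

lemma mul_sinh_pow_mul_sinh_two_mul_pow_lt_deriv {n₁ : ℕ} (hn₁ : 0 < n₁) (n₂ : ℕ) {x : ℝ}
    (hx : 0 < x) :
    (n₁ + 2 * n₂) * (sinh x ^ n₁ * sinh (2 * x) ^ n₂)
      < deriv (fun x => sinh x ^ n₁ * sinh (2 * x) ^ n₂) x := by
  have h₁ := hasDerivAt_sinh_mul_pow n₁ 1 x
  simp only [one_mul] at h₁
  rw [(h₁.fun_mul (hasDerivAt_sinh_mul_pow n₂ 2 x)).deriv]
  have e₁ := mul_sinh_mul_pow_lt hn₁ one_pos hx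
  have e₂ := mul_sinh_mul_pow_le n₂ zero_le_two hx.le
  simp only [one_mul, mul_one] at e₁
  have s₁ : 0 < sinh x ^ n₁ := pow_pos (sinh_pos_iff.2 hx) _
  have s₂ : 0 < sinh (2 * x) ^ n₂ := pow_pos (sinh_pos_iff.2 (by linarith)) _
  nlinarith [mul_lt_mul_of_pos_right e₁ s₂, mul_le_mul_of_nonneg_left e₂ s₁.le]

lemma not_eventually_le_of_hasDerivAt_of_tendsto {F g : ℝ → ℝ} {I c : ℝ}
    (hF : ∀ x, HasDerivAt F (g x) x) (hlim : Tendsto F atTop (𝓝 I)) (hc : 0 < c) :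
    ¬ ∀ᶠ x in atTop, c ≤ g x := by
  intro h
  obtain ⟨R, hR⟩ := eventually_atTop.1 h
  have hgrowth : ∀ x ≥ R, F R + c * (x - R) ≤ F x := fun x hx => by
    have := (convex_Ici R).mul_sub_le_image_sub_of_le_deriv
      (fun y _ => (hF y).continuousAt.continuousWithinAt)
      (fun y _ => (hF y).differentiableAt.differentiableWithinAt)
      (fun y hy => by rw [interior_Ici] at hy; rw [(hF y).deriv]; exact hR y (le_of_lt hy))
      R self_mem_Ici x hx hx
    linarith
  have hlin : Tendsto (fun x => F R + c * (x - R)) atTop atTop :=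
    tendsto_atTop_add_const_left _ _
      ((tendsto_id.atTop_add tendsto_const_nhds).const_mul_atTop hc)
  exact not_tendsto_nhds_of_tendsto_atTop
    (tendsto_atTop_mono' _ (eventually_atTop.2 ⟨R, hgrowth⟩) hlin) I hlim

lemma deriv_zero_of_even {u : ℝ → ℝ} (heven : ∀ x, u (-x) = u x) : deriv u 0 = 0 := by
  have h := deriv_comp_neg (f := u) (x := 0)
  simp only [heven, neg_zero] at h
  linarith

lemma hasDerivAt_integral_comp {Q f : ℝ → ℝ} (hQ : Continuous Q) {f' x : ℝ}
    (hf : HasDerivAt f f' x) :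
    HasDerivAt (fun x => ∫ y in 0..f x, Q y) (Q (f x) * f') x :=
  (hQ.integral_hasStrictDerivAt 0 (f x)).hasDerivAt.comp x hf

section

variable {P f v J : ℝ → ℝ} {t lam N : ℝ}
  (hP : Continuous P) (hf : Differentiable ℝ f)
  (hv : Differentiable ℝ v) (hv_le : ∀ x, 0 < x → deriv v x ≤ t * f x + (1 - t) * lam)
  (hJ : Differentiable ℝ J) (hJ_nonneg : ∀ x, 0 ≤ x → 0 ≤ J x)
  (hJ_lt : ∀ x, 0 < x → N * J x < deriv J x)
  (heq : ∀ x, deriv f x * P (f x) = exp (-v x) * J x)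
include hP hf hv hv_le hJ hJ_nonneg hJ_lt heq

lemma strictMonoOn_lyapunov :
    StrictMonoOn (fun R => exp (-v R) * J R + t * (∫ y in 0..f R, y * P y)
      + ((1 - t) * lam - N) * ∫ y in 0..f R, P y) (Ici 0) := by
  have hG : ∀ R, HasDerivAt (fun R => exp (-v R) * J R)
      (exp (-v R) * (deriv J R - deriv v R * J R)) R := fun R =>
    ((hv R).hasDerivAt.fun_neg.exp.fun_mul (hJ R).hasDerivAt).congr_deriv (by ring)
  have hΨ : ∀ R, HasDerivAt (fun R => exp (-v R) * J R + t * (∫ y in 0..f R, y * P y)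
      + ((1 - t) * lam - N) * ∫ y in 0..f R, P y)
      (exp (-v R) * (deriv J R - N * J R)
        + (t * f R + (1 - t) * lam - deriv v R) * (exp (-v R) * J R)) R := fun R => by
    have hA := hasDerivAt_integral_comp hP (hf R).hasDerivAt
    have hB := hasDerivAt_integral_comp (Q := fun y => y * P y) (by fun_prop) (hf R).hasDerivAt
    refine (((hG R).add (hB.const_mul t)).add (hA.const_mul _)).congr_deriv ?_
    linear_combination (t * f R + ((1 - t) * lam - N)) * heq R
  refine strictMonoOn_of_deriv_pos (convex_Ici 0)
    (fun R _ => (hΨ R).continuousAt.continuousWithinAt) fun R hR => ?_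
  rw [interior_Ici] at hR
  rw [(hΨ R).deriv]
  have h₁ := mul_pos (exp_pos (-v R)) (sub_pos.2 (hJ_lt R hR))
  have h₂ := mul_nonneg (sub_nonneg.2 (hv_le R hR)) (mul_nonneg (exp_pos (-v R)).le (hJ_nonneg R hR.le))
  linarith

theorem mul_integral_lt_of_deriv_mul_comp_eq (hf0 : f 0 = 0) (hflim : Tendsto f atTop (𝓝 lam)) :
    N * (∫ y in 0..lam, P y)
      < t * (∫ y in 0..lam, y * P y) + (1 - t) * lam * ∫ y in 0..lam, P y := by
  set Ψ : ℝ → ℝ := fun R => exp (-v R) * J R + t * (∫ y in 0..f R, y * P y)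
    + ((1 - t) * lam - N) * ∫ y in 0..f R, P y with hΨ
  have hmono : StrictMonoOn Ψ (Ici 0) := strictMonoOn_lyapunov hP hf hv hv_le hJ hJ_nonneg hJ_lt heq
  have hΨ1 : 0 < Ψ 1 := by
    refine lt_of_le_of_lt ?_ (hmono self_mem_Ici (mem_Ici.2 zero_le_one) one_pos)
    simpa [hΨ, hf0] using mul_nonneg (exp_pos (-v 0)).le (hJ_nonneg 0 le_rfl)
  have hlim : ∀ Q : ℝ → ℝ, Continuous Q →
      Tendsto (fun R => ∫ y in 0..f R, Q y) atTop (𝓝 (∫ y in 0..lam, Q y)) := fun Q hQ =>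
    ((intervalIntegral.continuous_primitive (fun a b => hQ.intervalIntegrable a b) 0).tendsto
      lam).comp hflim
  have hrest := ((hlim (fun y => y * P y) (by fun_prop)).const_mul t).add
    ((hlim P hP).const_mul ((1 - t) * lam - N))
  by_contra hL
  have hsmall : t * (∫ y in 0..lam, y * P y) + ((1 - t) * lam - N) * (∫ y in 0..lam, P y)
      < Ψ 1 / 2 := by
    linarith
  refine not_eventually_le_of_hasDerivAt_of_tendsto
    (fun R => hasDerivAt_integral_comp hP (hf R).hasDerivAt) (hlim P hP) (half_pos hΨ1) ?_
  filter_upwards [eventually_ge_atTop 1, hrest.eventually (eventually_lt_nhds hsmall)]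
    with R hR1 hR2
  have hΨR : Ψ 1 ≤ Ψ R :=
    hmono.monotoneOn (mem_Ici.2 zero_le_one) (mem_Ici.2 (zero_le_one.trans hR1)) hR1
  simp only [hΨ] at hΨR
  linarith [heq R]

end


lemma integral_mul_lt_mul_integral {P : ℝ → ℝ} {lam : ℝ} (hP : Continuous P) (hlam : 0 < lam)
    (hpos : ∀ y ∈ Ioc 0 lam, 0 < P y) :
    ∫ y in 0..lam, y * P y < lam * ∫ y in 0..lam, P y := by
  have h := intervalIntegral.intervalIntegral_pos_of_pos_on
    ((by fun_prop : Continuous fun y => (lam - y) * P y).intervalIntegrable 0 lam)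
    (fun y hy => mul_pos (sub_pos.2 hy.2) (hpos y ⟨hy.1, hy.2.le⟩)) hlam
  simp only [sub_mul] at h
  rw [intervalIntegral.integral_sub ((hP.const_mul lam).intervalIntegrable _ _)
    ((by fun_prop : Continuous fun y => y * P y).intervalIntegrable _ _), intervalIntegral.integral_const_mul] at h
  linarith

lemma lt_div_sub_div_of_mul_lt {N t lam A B : ℝ} (hA : 0 < A) (hB : B < lam * A)
    (h : N * A < t * B + (1 - t) * lam * A) : t < (lam - N) / (lam - B / A) := by
  have hden : 0 < lam - B / A := by rw [sub_pos, div_lt_iff₀ hA]; linarith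
  rw [lt_div_iff₀ hden, mul_sub, mul_div_assoc', sub_lt_iff_lt_add, ← sub_lt_iff_lt_add',
    lt_div_iff₀ hA]
  linarith

theorem stmt_9_general (n₁ n₂ : ℕ) (hn₁ : 0 < n₁) (lam t C : ℝ)
    (ht1 : t ≤ 1)
    (P u J uref : ℝ → ℝ)
    (hPcont : Continuous P)
    (hPpos : ∀ y ∈ Set.Ioc (0:ℝ) lam, 0 < P y)
    (hJ : ∀ x, J x = Real.sinh x ^ n₁ * Real.sinh (2 * x) ^ n₂)
    (huref : ∀ x, uref x = Real.log (Real.exp (lam * x) + Real.exp (-(lam * x))) + C)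
    (hu2 : ContDiff ℝ 2 u)
    (heven : ∀ x, u (-x) = u x)
    (hconv : StrictConvexOn ℝ Set.univ u)
    (hrange : Set.range (deriv u) = Set.Ioo (-lam) lam)
    (heq : ∀ x, deriv (deriv u) x * P (deriv u x)
      = Real.exp (-(t * u x + (1 - t) * uref x)) * J x) :
    t < (lam - n₁ - 2 * n₂)
      / (lam - (∫ y in (0:ℝ)..lam, y * P y) / (∫ y in (0:ℝ)..lam, P y)) := by
  obtain rfl : J = _ := funext hJ
  obtain rfl : uref = _ := funext huref
  have hlam : 0 < lam := by
    obtain ⟨h₁, h₂⟩ : deriv u 0 ∈ Ioo (-lam) lam := hrange ▸ mem_range_self 0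
    linarith
  have hud : Differentiable ℝ u := hu2.differentiable (by norm_num)
  have hflim : Tendsto (deriv u) atTop (𝓝 lam) :=
    tendsto_atTop_isLUB (strictMonoOn_univ.1 (hconv.strictMonoOn_deriv fun x _ => hud x)).monotone
      (hrange ▸ isLUB_Ioo (by linarith))
  have hv : ∀ x, HasDerivAt (fun x => t * u x + (1 - t) * (log (exp (lam * x) + exp (-(lam * x))) + C))
      (t * deriv u x + (1 - t) * (lam * tanh (lam * x))) x := fun x =>
    ((hud x).hasDerivAt.const_mul t).fun_add
      (((hasDerivAt_log_exp_add_exp_neg lam x).add_const C).const_mul (1 - t))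
  have key := mul_integral_lt_of_deriv_mul_comp_eq (N := n₁ + 2 * n₂) hPcont
    hu2.differentiable_deriv_two (fun x => (hv x).differentiableAt)
    (fun x _ => by
      rw [(hv x).deriv]
      gcongr
      exact mul_le_of_le_one_right hlam.le (tanh_lt_one _).le)
    (by fun_prop)
    (fun x hx => by positivity)
    (fun x hx => mul_sinh_pow_mul_sinh_two_mul_pow_lt_deriv hn₁ n₂ hx)
    heq (deriv_zero_of_even heven) hflim
  rw [sub_sub]
  exact lt_div_sub_div_of_mul_lt
    (intervalIntegral.intervalIntegral_pos_of_pos_on (hPcont.intervalIntegrable _ _)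
      (fun y hy => hPpos y ⟨hy.1, hy.2.le⟩) hlam)
    (integral_mul_lt_mul_integral hPcont hlam hPpos) key

/-- Upper bound on the time of existence in the continuity method: if u is an even,
C², strictly convex solution with u'(ℝ) = (−λ,λ) of
u''·P(u') = e^{−(tu+(1−t)u_ref)}·J, and n₁+2n₂ < λ, then
t < (λ − n₁ − 2n₂)/(λ − b̄) where b̄ is the weighted barycenter of [0,λ]. -/
theorem stmt_9 (n₁ n₂ : ℕ) (hn₁ : 0 < n₁) (lam t C : ℝ)
    (ht0 : 0 ≤ t) (ht1 : t ≤ 1)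
    (P u J uref : ℝ → ℝ)
    (hPcont : Continuous P)
    (hPpos : ∀ y ∈ Set.Ioc (0:ℝ) lam, 0 < P y)
    (hJ : ∀ x, J x = Real.sinh x ^ n₁ * Real.sinh (2 * x) ^ n₂)
    (huref : ∀ x, uref x = Real.log (Real.exp (lam * x) + Real.exp (-(lam * x))) + C)
    (hC : (∫ x in Set.Ioi (0:ℝ), Real.exp (-(uref x)) * J x) = ∫ y in (0:ℝ)..lam, P y)
    (hu2 : ContDiff ℝ 2 u)
    (heven : ∀ x, u (-x) = u x)
    (hconv : StrictConvexOn ℝ Set.univ u)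
    (hrange : Set.range (deriv u) = Set.Ioo (-lam) lam)
    (heq : ∀ x, deriv (deriv u) x * P (deriv u x)
      = Real.exp (-(t * u x + (1 - t) * uref x)) * J x)
    (hlam : (n₁ : ℝ) + 2 * n₂ < lam) :
    t < (lam - n₁ - 2 * n₂)
      / (lam - (∫ y in (0:ℝ)..lam, y * P y) / (∫ y in (0:ℝ)..lam, P y)) :=
  stmt_9_general n₁ n₂ hn₁ lam t C ht1 P u J uref hPcont hPpos hJ huref hu2 heven hconv hrange heq
end

section
/- Let ν : (0,∞) → ℝ be a convex function with minimum m attained at x₀, and suppose: (a) {ν ≤ m+1} ⊇ [x₀ − δ₀, x₀ + δ₀] for some δ₀ > 0, and (b) {ν ≤ m+1} = [y−δ, y+δ] with δ ≤ Ke^{m/2} for a constant K. If ∫₀^∞ e^{−ν(x)} dx = V, then 2δ₀·e^{−m−1} ≤ V ≤ 2Ke·e^{−m/2}, hence m is bounded above and below in terms of V, δ₀, K only. -/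
/-!
Convexity makes `ν` grow at least linearly off its sublevel set `[a, c] = {ν ≤ m + 1}`: if
`ν x > m + 1`, the point dividing `[x₀, x]` in the ratio `1 / (ν x - m)` has `ν ≤ m + 1`, so it
lies in `[a, c]`, whence `ν x ≥ m + (x - x₀) / (c - x₀)` beyond `c`, and symmetrically before `a`.
Integrating `e^{-ν} ≤ e^{-m}` over `[a, c]` and the two exponential tails gives
`V ≤ (1 + e⁻¹) (c - a) e^{-m} ≤ 2 δ e e^{-m}`. The lower bound is `e^{-ν} ≥ e^{-m-1}` on
`[x₀ - δ₀, x₀ + δ₀]`.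
-/

open MeasureTheory Set Real

theorem ConvexOn.mem_and_map_add_div_sub_le {s : Set ℝ} {f : ℝ → ℝ} (hf : ConvexOn ℝ s f)
    {x₀ x : ℝ} (hx₀ : x₀ ∈ s) (hx : x ∈ s) (h1 : 1 ≤ f x - f x₀) :
    x₀ + (x - x₀) / (f x - f x₀) ∈ s ∧ f (x₀ + (x - x₀) / (f x - f x₀)) ≤ f x₀ + 1 := by
  set t := (f x - f x₀)⁻¹
  have ht0 : 0 ≤ t := inv_nonneg.2 (by linarith)
  have ht1 : t ≤ 1 := inv_le_one_of_one_le₀ h1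
  have hz : x₀ + (x - x₀) / (f x - f x₀) = (1 - t) • x₀ + t • x := by
    simp only [smul_eq_mul, t]; ring
  have hsum : 1 - t + t = 1 := by ring
  rw [hz]
  refine ⟨hf.1 hx₀ hx (by linarith) ht0 hsum, ?_⟩
  calc f ((1 - t) • x₀ + t • x) ≤ (1 - t) • f x₀ + t • f x := hf.2 hx₀ hx (by linarith) ht0 hsum
    _ = f x₀ + t * (f x - f x₀) := by simp only [smul_eq_mul]; ring
    _ = f x₀ + 1 := by rw [inv_mul_cancel₀ (by linarith)]

theorem ConvexOn.add_div_le_of_sublevel_le {s : Set ℝ} {f : ℝ → ℝ} (hf : ConvexOn ℝ s f)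
    {x₀ x c : ℝ} (hx₀ : x₀ ∈ s) (hx : x ∈ s) (hx₀c : x₀ < c) (hcx : c < x)
    (hsub : ∀ z ∈ s, f z ≤ f x₀ + 1 → z ≤ c) :
    f x₀ + (x - x₀) / (c - x₀) ≤ f x := by
  have h1 : 1 < f x - f x₀ := by
    by_contra! h
    exact hcx.not_ge (hsub x hx (by linarith))
  obtain ⟨hz, hfz⟩ := hf.mem_and_map_add_div_sub_le hx₀ hx h1.le
  have hzc : (x - x₀) / (f x - f x₀) ≤ c - x₀ := by linarith [hsub _ hz hfz]
  rw [div_le_iff₀ (by linarith)] at hzc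
  linarith [(div_le_iff₀' (sub_pos.2 hx₀c)).2 hzc]

theorem ConvexOn.add_div_le_of_le_sublevel {s : Set ℝ} {f : ℝ → ℝ} (hf : ConvexOn ℝ s f)
    {x₀ x a : ℝ} (hx₀ : x₀ ∈ s) (hx : x ∈ s) (hax₀ : a < x₀) (hxa : x < a)
    (hsub : ∀ z ∈ s, f z ≤ f x₀ + 1 → a ≤ z) :
    f x₀ + (x₀ - x) / (x₀ - a) ≤ f x := by
  have h1 : 1 < f x - f x₀ := by
    by_contra! h
    exact hxa.not_ge (hsub x hx (by linarith))
  obtain ⟨hz, hfz⟩ := hf.mem_and_map_add_div_sub_le hx₀ hx h1.le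
  have hzc : (x₀ - x) / (f x - f x₀) ≤ x₀ - a := by
    have hneg : (x₀ - x) / (f x - f x₀) = -((x - x₀) / (f x - f x₀)) := by ring
    linarith [hsub _ hz hfz]
  rw [div_le_iff₀ (by linarith)] at hzc
  linarith [(div_le_iff₀' (sub_pos.2 hax₀)).2 hzc]

theorem ConvexOn.continuousOn_exp_neg {s : Set ℝ} {f : ℝ → ℝ} (hf : ConvexOn ℝ s f)
    (hs : IsOpen s) : ContinuousOn (fun x => exp (-f x)) s :=
  continuous_exp.comp_continuousOn (hf.continuousOn hs).neg

theorem integral_exp_neg_sub_div_Ioi (c x₀ : ℝ) {b : ℝ} (hb : 0 < b) :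
    ∫ x in Ioi c, exp (-((x - x₀) / b)) = b * exp (-((c - x₀) / b)) := by
  have h : ∀ x, exp (-((x - x₀) / b)) = exp (x₀ / b) * exp (-b⁻¹ * x) := fun x => by
    rw [← exp_add]; congr 1; field_simp; ring
  simp_rw [h]
  rw [integral_const_mul, integral_exp_mul_Ioi (by simpa using hb)]
  field_simp

theorem integrableOn_exp_neg_sub_div_Ioi (c x₀ : ℝ) {b : ℝ} (hb : 0 < b) :
    IntegrableOn (fun x => exp (-((x - x₀) / b))) (Ioi c) :=
  Integrable.of_integral_ne_zero <| by rw [integral_exp_neg_sub_div_Ioi c x₀ hb]; positivity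

theorem integral_exp_neg_sub_div_Iic (a x₀ : ℝ) {b : ℝ} (hb : 0 < b) :
    ∫ x in Iic a, exp (-((x₀ - x) / b)) = b * exp (-((x₀ - a) / b)) := by
  have h : ∀ x, exp (-((x₀ - x) / b)) = exp (-(x₀ / b)) * exp (b⁻¹ * x) := fun x => by
    rw [← exp_add]; congr 1; field_simp; ring
  simp_rw [h]
  rw [integral_const_mul, integral_exp_mul_Iic (by simpa using hb)]
  field_simp

theorem integrableOn_exp_neg_sub_div_Iic (a x₀ : ℝ) {b : ℝ} (hb : 0 < b) :
    IntegrableOn (fun x => exp (-((x₀ - x) / b))) (Iic a) :=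
  Integrable.of_integral_ne_zero <| by rw [integral_exp_neg_sub_div_Iic a x₀ hb]; positivity

theorem integrableOn_and_setIntegral_le_of_le {X : Type*} [TopologicalSpace X] [MeasurableSpace X]
    [OpensMeasurableSpace X] {μ : Measure X} {f g : X → ℝ} {s : Set X} (hs : MeasurableSet s)
    (hf : ContinuousOn f s) (hf0 : ∀ x ∈ s, 0 ≤ f x) (hg : IntegrableOn g s μ)
    (hfg : ∀ x ∈ s, f x ≤ g x) :
    IntegrableOn f s μ ∧ ∫ x in s, f x ∂μ ≤ ∫ x in s, g x ∂μ := by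
  have hfi : IntegrableOn f s μ := by
    refine hg.mono' (hf.aestronglyMeasurable hs) ?_
    filter_upwards [ae_restrict_mem hs] with x hx
    rw [Real.norm_of_nonneg (hf0 x hx)]
    exact hfg x hx
  exact ⟨hfi, setIntegral_mono_on hfi hg hs hfg⟩

theorem integrableOn_exp_neg_Ioi_and_integral_le_of_sublevel_le {f : ℝ → ℝ} {l c x₀ : ℝ}
    (hf : ConvexOn ℝ (Ioi l) f) (hx₀ : x₀ ∈ Ioi l) (hx₀c : x₀ < c)
    (hsub : ∀ z ∈ Ioi l, f z ≤ f x₀ + 1 → z ≤ c) :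
    IntegrableOn (fun x => exp (-f x)) (Ioi c) ∧
      ∫ x in Ioi c, exp (-f x) ≤ (c - x₀) * exp (-1) * exp (-f x₀) := by
  have hcx₀ : 0 < c - x₀ := sub_pos.2 hx₀c
  have hle : ∀ x ∈ Ioi c, exp (-f x) ≤ exp (-f x₀) * exp (-((x - x₀) / (c - x₀))) :=
    fun x hx => by
      rw [← exp_add, exp_le_exp]
      linarith [hf.add_div_le_of_sublevel_le hx₀ (hx₀.trans (hx₀c.trans hx)) hx₀c hx hsub]
  obtain ⟨hint, hbound⟩ := integrableOn_and_setIntegral_le_of_le measurableSet_Ioi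
    ((hf.continuousOn_exp_neg isOpen_Ioi).mono
      (Ioi_subset_Ioi (hx₀.le.trans hx₀c.le)))
    (fun x _ => (exp_pos _).le) ((integrableOn_exp_neg_sub_div_Ioi c x₀ hcx₀).const_mul _) hle
  refine ⟨hint, hbound.trans_eq ?_⟩
  rw [integral_const_mul, integral_exp_neg_sub_div_Ioi c x₀ hcx₀, div_self hcx₀.ne']
  ring

theorem integrableOn_exp_neg_Ioo_and_integral_le_of_le_sublevel {f : ℝ → ℝ} {l a x₀ : ℝ}
    (hf : ConvexOn ℝ (Ioi l) f) (hx₀ : x₀ ∈ Ioi l) (hax₀ : a < x₀)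
    (hsub : ∀ z ∈ Ioi l, f z ≤ f x₀ + 1 → a ≤ z) :
    IntegrableOn (fun x => exp (-f x)) (Ioo l a) ∧
      ∫ x in Ioo l a, exp (-f x) ≤ (x₀ - a) * exp (-1) * exp (-f x₀) := by
  have hx₀a : 0 < x₀ - a := sub_pos.2 hax₀
  have hIoo : Ioo l a ⊆ Iic a := Ioo_subset_Ioc_self.trans Ioc_subset_Iic_self
  have hle : ∀ x ∈ Ioo l a, exp (-f x) ≤ exp (-f x₀) * exp (-((x₀ - x) / (x₀ - a))) :=
    fun x hx => by
      rw [← exp_add, exp_le_exp]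
      linarith [hf.add_div_le_of_le_sublevel hx₀ hx.1 hax₀ hx.2 hsub]
  obtain ⟨hint, hbound⟩ := integrableOn_and_setIntegral_le_of_le measurableSet_Ioo
    ((hf.continuousOn_exp_neg isOpen_Ioi).mono
      Ioo_subset_Ioi_self)
    (fun x _ => (exp_pos _).le)
    (((integrableOn_exp_neg_sub_div_Iic a x₀ hx₀a).mono_set hIoo).const_mul _) hle
  refine ⟨hint, hbound.trans ?_⟩
  rw [integral_const_mul, mul_comm]
  gcongr
  calc ∫ x in Ioo l a, exp (-((x₀ - x) / (x₀ - a)))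
      ≤ ∫ x in Iic a, exp (-((x₀ - x) / (x₀ - a))) :=
        setIntegral_mono_set (integrableOn_exp_neg_sub_div_Iic a x₀ hx₀a)
          (ae_of_all _ fun x => (exp_pos _).le) hIoo.eventuallyLE
    _ = (x₀ - a) * exp (-1) := by
        rw [integral_exp_neg_sub_div_Iic a x₀ hx₀a, div_self hx₀a.ne']

theorem integrableOn_exp_neg_and_integral_le_of_sublevel_subset {f : ℝ → ℝ} {l a c x₀ : ℝ}
    (hf : ConvexOn ℝ (Ioi l) f) (hla : l < a) (hax₀ : a < x₀) (hx₀c : x₀ < c)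
    (hmin : ∀ x ∈ Icc a c, f x₀ ≤ f x)
    (hsub : ∀ x ∈ Ioi l, f x ≤ f x₀ + 1 → x ∈ Icc a c) :
    IntegrableOn (fun x => exp (-f x)) (Ioi l) ∧
      ∫ x in Ioi l, exp (-f x) ≤ (1 + exp (-1)) * (c - a) * exp (-f x₀) := by
  have hx₀ : x₀ ∈ Ioi l := hla.trans hax₀
  obtain ⟨hint_left, hleft⟩ := integrableOn_exp_neg_Ioo_and_integral_le_of_le_sublevel hf hx₀
    hax₀ fun z hz hfz => (hsub z hz hfz).1
  obtain ⟨hint_mid, hmid⟩ := integrableOn_and_setIntegral_le_of_le measurableSet_Icc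
    ((hf.continuousOn_exp_neg isOpen_Ioi).mono
      fun x hx => hla.trans_le hx.1)
    (fun x _ => (exp_pos _).le) (integrableOn_const (measure_Icc_lt_top (μ := volume)).ne)
    fun x hx => exp_le_exp.2 (neg_le_neg (hmin x hx))
  obtain ⟨hint_right, hright⟩ := integrableOn_exp_neg_Ioi_and_integral_le_of_sublevel_le hf hx₀
    hx₀c fun z hz hfz => (hsub z hz hfz).2
  have hunion : Ioo l a ∪ Icc a c = Ioc l c := Ioo_union_Icc_eq_Ioc hla (hax₀.trans hx₀c).le
  have hdecomp : Ioi l = (Ioo l a ∪ Icc a c) ∪ Ioi c := by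
    rw [hunion, Ioc_union_Ioi_eq_Ioi (hx₀.trans hx₀c).le]
  have hdisj_mid : Disjoint (Ioo l a) (Icc a c) :=
    Set.disjoint_left.2 fun x hx hx' => hx.2.not_ge hx'.1
  have hdisj_right : Disjoint (Ioo l a ∪ Icc a c) (Ioi c) :=
    hunion ▸ Set.disjoint_left.2 fun x hx hx' => hx.2.not_gt hx'
  refine ⟨hdecomp ▸ (hint_left.union hint_mid).union hint_right, ?_⟩
  rw [hdecomp, setIntegral_union hdisj_right measurableSet_Ioi (hint_left.union hint_mid)
    hint_right, setIntegral_union hdisj_mid measurableSet_Icc hint_left hint_mid]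
  rw [setIntegral_const, Real.volume_real_Icc_of_le (hax₀.trans hx₀c).le, smul_eq_mul] at hmid
  linarith [show (1 + exp (-1)) * (c - a) * exp (-f x₀) = (x₀ - a) * exp (-1) * exp (-f x₀)
    + (c - a) * exp (-f x₀) + (c - x₀) * exp (-1) * exp (-f x₀) by ring]

theorem stmt_12_general (ν : ℝ → ℝ) (m x₀ y δ δ₀ K V : ℝ)
    (hconv : ConvexOn ℝ (Set.Ioi 0) ν)
    (hmin : ∀ x ∈ Set.Ioi (0:ℝ), m ≤ ν x) (hm : ν x₀ = m)
    (hδ₀ : 0 < δ₀)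
    (hincl : Set.Icc (x₀ - δ₀) (x₀ + δ₀) ⊆ {x ∈ Set.Ioi (0:ℝ) | ν x ≤ m + 1})
    (hlevel : {x ∈ Set.Ioi (0:ℝ) | ν x ≤ m + 1} = Set.Icc (y - δ) (y + δ))
    (hδK : δ ≤ K * Real.exp (m / 2))
    (hV : (∫ x in Set.Ioi (0:ℝ), Real.exp (-(ν x))) = V) :
    2 * δ₀ * Real.exp (-m - 1) ≤ V ∧ V ≤ 2 * K * Real.exp 1 * Real.exp (-m / 2) := by
  subst hm hV
  have hsub : ∀ x ∈ Ioi (0:ℝ), ν x ≤ ν x₀ + 1 → x ∈ Icc (y - δ) (y + δ) :=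
    fun x hx hνx => hlevel ▸ ⟨hx, hνx⟩
  have hlow : y - δ ≤ x₀ - δ₀ := (hlevel ▸ hincl (left_mem_Icc.2 (by linarith))).1
  have hupp : x₀ + δ₀ ≤ y + δ := (hlevel ▸ hincl (right_mem_Icc.2 (by linarith))).2
  have ha : 0 < y - δ := by
    have ha_mem : y - δ ∈ Icc (y - δ) (y + δ) := left_mem_Icc.2 (by linarith)
    exact (hlevel ▸ ha_mem).1
  have hIcc_sub : Icc (x₀ - δ₀) (x₀ + δ₀) ⊆ Ioi 0 := fun x hx => (hincl hx).1
  obtain ⟨hint, hupper⟩ := integrableOn_exp_neg_and_integral_le_of_sublevel_subset hconv ha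
    (by linarith) (by linarith) (fun x hx => hmin x (ha.trans_le hx.1)) hsub
  constructor
  · calc 2 * δ₀ * exp (-ν x₀ - 1)
        = exp (-ν x₀ - 1) * volume.real (Icc (x₀ - δ₀) (x₀ + δ₀)) := by
          rw [Real.volume_real_Icc_of_le (by linarith)]; ring
      _ ≤ ∫ x in Icc (x₀ - δ₀) (x₀ + δ₀), exp (-ν x) :=
          setIntegral_ge_of_const_le_real measurableSet_Icc measure_Icc_lt_top.ne
            (fun x hx => exp_le_exp.2 (by linarith [(hincl hx).2]))
            (hint.mono_set hIcc_sub)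
      _ ≤ ∫ x in Ioi 0, exp (-ν x) :=
          setIntegral_mono_set hint (ae_of_all _ fun x => (exp_pos _).le)
            hIcc_sub.eventuallyLE
  · have he : 1 + exp (-1) ≤ exp 1 := by
      linarith [add_one_le_exp (1:ℝ), exp_le_one_iff.2 (by norm_num : (-1:ℝ) ≤ 0)]
    calc _ ≤ (1 + exp (-1)) * (y + δ - (y - δ)) * exp (-ν x₀) := hupper
      _ ≤ exp 1 * (2 * (K * exp (ν x₀ / 2))) * exp (-ν x₀) := by gcongr <;> linarith
      _ = 2 * K * exp 1 * (exp (ν x₀ / 2) * exp (-ν x₀)) := by ring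
      _ = 2 * K * exp 1 * exp (-ν x₀ / 2) := by rw [← exp_add]; ring_nf

/-- Two-sided bound on V = ∫₀^∞ e^{−ν} in terms of the minimum value m of the convex
potential ν, the inner radius δ₀ and the width bound δ ≤ K·e^{m/2} of the sublevel
set {ν ≤ m+1}: 2δ₀·e^{−m−1} ≤ V ≤ 2K·e·e^{−m/2}. -/
theorem stmt_12 (ν : ℝ → ℝ) (m x₀ y δ δ₀ K V : ℝ)
    (hconv : ConvexOn ℝ (Set.Ioi 0) ν)
    (hx₀ : x₀ ∈ Set.Ioi (0:ℝ))
    (hmin : ∀ x ∈ Set.Ioi (0:ℝ), m ≤ ν x) (hm : ν x₀ = m)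
    (hδ₀ : 0 < δ₀)
    (hincl : Set.Icc (x₀ - δ₀) (x₀ + δ₀) ⊆ {x ∈ Set.Ioi (0:ℝ) | ν x ≤ m + 1})
    (hlevel : {x ∈ Set.Ioi (0:ℝ) | ν x ≤ m + 1} = Set.Icc (y - δ) (y + δ))
    (hδK : δ ≤ K * Real.exp (m / 2))
    (hV : (∫ x in Set.Ioi (0:ℝ), Real.exp (-(ν x))) = V) :
    2 * δ₀ * Real.exp (-m - 1) ≤ V ∧ V ≤ 2 * K * Real.exp 1 * Real.exp (-m / 2) :=
  stmt_12_general ν m x₀ y δ δ₀ K V hconv hmin hm hδ₀ hincl hlevel hδK hV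
end

section
/- Let u : ℝ → ℝ be an even C² strictly convex function with u'(ℝ) = (−λ, λ), satisfying u''(x)P(u'(x)) = e^{−v(x)}J(x) where P is a polynomial, J(x) = sinh^{n₁}(x)sinh^{n₂}(2x), and v is smooth. Then u is smooth (C^∞) on ℝ. -/
open scoped Topology NNReal ENNReal ContDiff
open Filter FormalMultilinearSeries

namespace Stmt15Aux

theorem eq_of_pow_eq_sign {a b : ℝ} {k : ℕ} (hk : k ≠ 0) (hpow : a ^ k = b ^ k)
    (hsign : 0 ≤ a ↔ 0 ≤ b) : a = b := by
  have habs : |a| = |b| := by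
    have h1 : |a| ^ k = |b| ^ k := by rw [← abs_pow, ← abs_pow, hpow]
    exact (pow_left_strictMonoOn₀ hk).injOn (by simp) (by simp) h1
  rcases abs_eq_abs.mp habs with h | h
  · exact h
  · by_cases ha : 0 ≤ a
    · have hb : 0 ≤ b := hsign.mp ha
      have : a ≤ 0 := by rw [h]; linarith
      have ha0 : a = 0 := le_antisymm this ha
      rw [ha0] at h ⊢
      linarith [h]
    · have hb : ¬ 0 ≤ b := fun hb => ha (hsign.mpr hb)
      push_neg at ha hb
      nlinarith [h]

theorem hasFDerivAt_equiv {f : ℝ → ℝ} {c x : ℝ} (hc : c ≠ 0) (hf : HasDerivAt f c x) :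
    HasFDerivAt f
      (((ContinuousLinearEquiv.unitsEquivAut ℝ (Units.mk0 c hc)) : ℝ ≃L[ℝ] ℝ) : ℝ →L[ℝ] ℝ) x := by
  have h1 : (((ContinuousLinearEquiv.unitsEquivAut ℝ (Units.mk0 c hc)) : ℝ ≃L[ℝ] ℝ) : ℝ →L[ℝ] ℝ)
      = ContinuousLinearMap.smulRight (1 : ℝ →L[ℝ] ℝ) c := by
    ext y
    simp [ContinuousLinearEquiv.unitsEquivAut, mul_comm]
  rw [h1]
  exact hf.hasFDerivAt

theorem ftc_scale {f f' : ℝ → ℝ} (hf : ∀ y, HasDerivAt f (f' y) y) (hc : Continuous f')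
    (x : ℝ) : f x - f 0 = ∫ s in (0:ℝ)..1, x * f' (s * x) := by
  have hd : ∀ t, HasDerivAt (fun t => f (t * x)) (x * f' (t * x)) t := by
    intro t
    have := (hf (t * x)).comp t (hasDerivAt_mul_const x)
    have e : f' (t * x) * x = x * f' (t * x) := mul_comm _ _
    rw [e] at this
    exact this
  rw [intervalIntegral.integral_eq_sub_of_hasDerivAt (fun t _ => hd t)
    ((continuous_const.mul (hc.comp (continuous_id.mul continuous_const))).intervalIntegrable _ _)]
  simp

theorem param_smooth {K : ℝ × ℝ → ℝ} (hK : ContDiff ℝ ∞ K) :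
    ContDiff ℝ ∞ (fun x => ∫ s in (0:ℝ)..1, K (s, x)) := by
  have key : ∀ (K : ℝ × ℝ → ℝ), ContDiff ℝ ∞ K → ∀ x₀ : ℝ,
      HasDerivAt (fun x => ∫ s in (0:ℝ)..1, K (s, x))
        (∫ s in (0:ℝ)..1, fderiv ℝ K (s, x₀) (0, 1)) x₀ := by
    intro K hK x₀
    have hK' : Continuous (fun p : ℝ × ℝ => fderiv ℝ K p (0, 1)) :=
      (hK.continuous_fderiv (by simp)).clm_apply continuous_const
    obtain ⟨C, hC⟩ := (isCompact_Icc.prod (isCompact_closedBall x₀ 1)).exists_bound_of_continuousOn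
      hK'.continuousOn
    have hd : ∀ s x : ℝ, HasDerivAt (fun x => K (s, x)) (fderiv ℝ K (s, x) (0, 1)) x := by
      intro s x
      have h1 : HasDerivAt (fun x : ℝ => (s, x)) ((0:ℝ), (1:ℝ)) x :=
        (hasDerivAt_const x s).prodMk (hasDerivAt_id x)
      exact ((hK.differentiable (by simp) (s, x)).hasFDerivAt).comp_hasDerivAt x h1
    have := intervalIntegral.hasDerivAt_integral_of_dominated_loc_of_deriv_le
      (μ := MeasureTheory.volume) (a := 0) (b := 1) (bound := fun _ => C)
      (F := fun x s => K (s, x)) (F' := fun x s => fderiv ℝ K (s, x) (0, 1))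
      (x₀ := x₀) (s := Metric.ball x₀ 1) (Metric.ball_mem_nhds x₀ one_pos)
      (Eventually.of_forall fun x =>
        (hK.continuous.comp (continuous_id.prodMk continuous_const)).aestronglyMeasurable)
      ((hK.continuous.comp (continuous_id.prodMk continuous_const)).intervalIntegrable _ _)
      ((hK'.comp (continuous_id.prodMk continuous_const)).aestronglyMeasurable)
      (Eventually.of_forall fun t ht x hx => hC (t, x)
        ⟨Set.Ioc_subset_Icc_self (by rwa [Set.uIoc_of_le zero_le_one] at ht),
          Metric.ball_subset_closedBall hx⟩)
      intervalIntegrable_const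
      (Eventually.of_forall fun t _ x _ => hd t x)
    exact this.2
  have main : ∀ n : ℕ, ∀ K : ℝ × ℝ → ℝ, ContDiff ℝ ∞ K →
      ContDiff ℝ n (fun x => ∫ s in (0:ℝ)..1, K (s, x)) := by
    intro n
    induction n with
    | zero =>
      intro K hK
      exact contDiff_zero.mpr (continuous_iff_continuousAt.mpr fun x => (key K hK x).continuousAt)
    | succ k ih =>
      intro K hK
      have hK2 : ContDiff ℝ ∞ (fun p : ℝ × ℝ => fderiv ℝ K p (0, 1)) :=
        (hK.fderiv_right (m := ∞) (by simp)).clm_apply contDiff_const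
      have hder : deriv (fun x => ∫ s in (0:ℝ)..1, K (s, x))
          = fun x => ∫ s in (0:ℝ)..1, fderiv ℝ K (s, x) (0, 1) :=
        funext fun x => (key K hK x).deriv
      rw [Nat.cast_succ]
      refine contDiff_succ_iff_deriv.mpr ⟨fun x => (key K hK x).differentiableAt, by simp, ?_⟩
      rw [hder]
      exact ih _ hK2
  exact contDiff_infty.mpr fun n => main n K hK

theorem contDiffAt_rpow_comp {f : ℝ → ℝ} {x α : ℝ} (hf : ContDiffAt ℝ ∞ f x) (hfx : 0 < f x) :
    ContDiffAt ℝ ∞ (fun y => f y ^ α) x := by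
  have hev : ∀ᶠ y in 𝓝 x, Real.exp (Real.log (f y) * α) = f y ^ α := by
    filter_upwards [(hf.continuousAt).eventually (eventually_gt_nhds hfx)] with y hy
    rw [Real.rpow_def_of_pos hy]
  have hev' : ∀ᶠ y in 𝓝 x, f y ^ α = Real.exp (Real.log (f y) * α) :=
    hev.mono fun y hy => hy.symm
  exact (((Real.contDiff_exp (n := ∞)).contDiffAt.comp x
    (((Real.contDiffAt_log.2 hfx.ne').comp x hf).mul contDiffAt_const))).congr_of_eventuallyEq
    hev'

theorem analytic_local_inverse {f : ℝ → ℝ} {c x : ℝ} (hf : ContDiffAt ℝ ∞ f x) (hc : c ≠ 0)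
    (hd : HasDerivAt f c x) :
    ∃ finv : ℝ → ℝ, ContDiffAt ℝ ∞ finv (f x) ∧ ∀ᶠ y in 𝓝 x, finv (f y) = y := by
  have hfd := hasFDerivAt_equiv hc hd
  refine ⟨hf.localInverse hfd (by simp), hf.to_localInverse hfd (by simp), ?_⟩
  exact (hf.hasStrictFDerivAt' hfd (by simp)).eventually_left_inverse


end Stmt15Aux

open Stmt15Aux

/-- Regularity: an even C², strictly convex solution u with u'(ℝ) = (−λ,λ) of
u''·p(u') = e^{−v}·J, where p = X^{n₁+n₂}·q with q(0) ≠ 0 and v smooth, is smooth. -/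
theorem stmt_15 (n₁ n₂ : ℕ) (hn₁ : 1 ≤ n₁) (lam : ℝ) (hlam : 0 < lam)
    (p q : Polynomial ℝ) (hpq : p = Polynomial.X ^ (n₁ + n₂) * q)
    (hq0 : q.eval 0 ≠ 0)
    (v u : ℝ → ℝ) (hv : ContDiff ℝ (⊤ : ℕ∞) v)
    (hu : ContDiff ℝ 2 u) (heven : ∀ x, u (-x) = u x)
    (hconv : StrictConvexOn ℝ Set.univ u)
    (hrange : Set.range (deriv u) = Set.Ioo (-lam) lam)
    (heq : ∀ x, deriv (deriv u) x * p.eval (deriv u x)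
      = Real.exp (-(v x)) * (Real.sinh x ^ n₁ * Real.sinh (2 * x) ^ n₂)) :
    ContDiff ℝ (⊤ : ℕ∞) u := by
  set h : ℝ → ℝ := deriv u with hh
  have hdiffu : Differentiable ℝ u := hu.differentiable (by norm_num)
  have hC1h : ContDiff ℝ 1 h := by
    have h2 : ContDiff ℝ (1+1 : WithTop ℕ∞) u := by norm_num at hu ⊢; exact hu
    exact (contDiff_succ_iff_deriv.mp h2).2.2
  have hdh : Differentiable ℝ h := hC1h.differentiable (by norm_num)
  have hodd : ∀ x, h (-x) = - h x := by
    intro x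
    have h1 : HasDerivAt (fun y : ℝ => u (-y)) (h (-x) * (-1)) x :=
      HasDerivAt.comp x (hdiffu (-x)).hasDerivAt ((hasDerivAt_id x).neg)
    have h2 : (fun y : ℝ => u (-y)) = u := funext heven
    rw [h2] at h1
    have h3 := h1.deriv
    rw [← hh] at h3
    linarith
  have h0 : h 0 = 0 := by have := hodd 0; simp only [neg_zero] at this; linarith
  have hmono : StrictMonoOn h Set.univ := hconv.strictMonoOn_deriv (fun x _ => hdiffu x)
  have hpos : ∀ x : ℝ, 0 < x → 0 < h x := fun x hx => by
    have := hmono (Set.mem_univ 0) (Set.mem_univ x) hx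
    rwa [h0] at this
  set m := n₁ + n₂ with hm
  set g : ℝ → ℝ := fun x => Real.exp (-(v x)) * (Real.sinh x ^ n₁ * Real.sinh (2*x) ^ n₂) with hg
  have hgω : ContDiff ℝ ∞ g := by
    apply ContDiff.mul
    · exact Real.contDiff_exp.comp hv.neg
    · exact (Real.contDiff_sinh.pow n₁).mul
        ((Real.contDiff_sinh.comp (contDiff_const.mul contDiff_id)).pow n₂)
  have hgx : ∀ x : ℝ, x ≠ 0 → g x ≠ 0 := by
    intro x hx
    have h1 : Real.sinh x ≠ 0 := Real.sinh_ne_zero.mpr hx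
    have h2 : Real.sinh (2*x) ≠ 0 := Real.sinh_ne_zero.mpr (by simpa using hx)
    exact mul_ne_zero (Real.exp_ne_zero _) (mul_ne_zero (pow_ne_zero _ h1) (pow_ne_zero _ h2))
  have hpeval : ∀ x : ℝ, x ≠ 0 → p.eval (h x) ≠ 0 := by
    intro x hx hcon
    apply hgx x hx
    have h1 := heq x
    rw [hcon, mul_zero] at h1
    exact h1.symm
  have hq00 : q.coeff 0 ≠ 0 := by rwa [Polynomial.coeff_zero_eq_eval_zero]
  set c : ℕ → ℝ := fun i => q.coeff i / (m + i + 1) with hcdef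
  set R : ℝ → ℝ := fun y => ∑ i ∈ q.support, c i * y ^ i with hRdef
  set A : ℝ → ℝ := fun y => ∑ i ∈ q.support, c i * y ^ (m + i + 1) with hAdef
  have hAfact : ∀ y, A y = y ^ (m+1) * R y := by
    intro y
    rw [hAdef, hRdef, Finset.mul_sum]
    refine Finset.sum_congr rfl fun i _ => ?_
    rw [show m + i + 1 = (m+1) + i from by omega, pow_add]
    ring
  have hqeval : ∀ y : ℝ, q.eval y = ∑ i ∈ q.support, q.coeff i * y ^ i := by
    intro y; rw [Polynomial.eval_eq_sum, Polynomial.sum_def]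
  have hpeval' : ∀ y : ℝ, p.eval y = y ^ m * q.eval y := by
    intro y; rw [hpq]; simp
  have hAderiv : ∀ y, HasDerivAt A (p.eval y) y := by
    intro y
    have h1 : HasDerivAt A (∑ i ∈ q.support, c i * ((m + i + 1) * y ^ (m + i))) y := by
      apply HasDerivAt.fun_sum
      intro i _
      have h2 := (hasDerivAt_pow (m + i + 1) y).const_mul (c i)
      simpa using h2
    convert h1 using 1
    rw [hpeval' y, hqeval y, Finset.mul_sum]
    refine Finset.sum_congr rfl fun i _ => ?_
    have hne : ((m:ℝ) + i + 1) ≠ 0 := by positivity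
    have hpa : y ^ (m + i) = y ^ m * y ^ i := pow_add y m i
    rw [hcdef, hpa]
    field_simp
  have hAω : ContDiff ℝ ∞ A := ContDiff.sum fun i _ => contDiff_const.mul (contDiff_id.pow _)
  have hRω : ContDiff ℝ ∞ R := ContDiff.sum fun i _ => contDiff_const.mul (contDiff_id.pow _)
  have h0mem : (0:ℕ) ∈ q.support := Polynomial.mem_support_iff.mpr hq00
  have hR0 : R 0 = q.coeff 0 / ((m:ℝ) + 1) := by
    have hrr : R 0 = ∑ i ∈ q.support, c i * (0:ℝ) ^ i := rfl
    rw [hrr, Finset.sum_eq_single 0]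
    · simp [hcdef]
    · intro i _ hi; simp [zero_pow hi]
    · intro hn; exact absurd h0mem hn
  have hR0ne : R 0 ≠ 0 := by
    rw [hR0]
    exact div_ne_zero hq00 (by positivity)
  set S : ℝ → ℝ := fun x => A (h x) with hSdef
  have hSderiv : ∀ x, HasDerivAt S (g x) x := by
    intro x
    have h1 : HasDerivAt h (deriv h x) x := (hdh x).hasDerivAt
    have h2 := HasDerivAt.comp x (hAderiv (h x)) h1
    have h3 : Polynomial.eval (h x) p * deriv h x = g x := by
      rw [mul_comm]; exact heq x
    rw [h3] at h2
    exact h2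
  have hSsm : ContDiff ℝ ∞ S := by
    have hdS : deriv S = g := funext fun x => (hSderiv x).deriv
    exact contDiff_infty_iff_deriv.mpr ⟨fun x => (hSderiv x).differentiableAt, by rw [hdS]; exact hgω⟩
  have hS0 : S 0 = 0 := by
    rw [hSdef]; simp only [h0]
    rw [hAfact 0, zero_pow (Nat.succ_ne_zero m), zero_mul]
  suffices hhall : ∀ x₀, ContDiffAt ℝ ∞ h x₀ by
    have hhs : ContDiff ℝ ∞ h := contDiff_iff_contDiffAt.mpr hhall
    exact contDiff_infty_iff_deriv.mpr ⟨hdiffu, hhs⟩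
  intro x₀
  by_cases hx0 : x₀ = 0
  case neg =>
    obtain ⟨finv, hfinv, hleft⟩ :=
      analytic_local_inverse hAω.contDiffAt (hpeval x₀ hx0) (hAderiv (h x₀))
    have hhc : ContinuousAt h x₀ := (hdh x₀).continuousAt
    have hev1 : ∀ᶠ x in 𝓝 x₀, finv (S x) = h x := hhc.eventually hleft
    have hhana : ContDiffAt ℝ ∞ h x₀ := by
      have hcomp : ContDiffAt ℝ ∞ (fun x => finv (S x)) x₀ :=
        ContDiffAt.comp x₀ hfinv hSsm.contDiffAt
      exact hcomp.congr_of_eventuallyEq (hev1.mono fun x hx => hx.symm)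
    exact hhana
  case pos =>
    subst hx0
    -- S is positive on the right of 0
    have hgpos : ∀ x : ℝ, 0 < x → 0 < g x := by
      intro x hx
      have h1 : 0 < Real.sinh x := Real.sinh_pos_iff.mpr hx
      have h2 : 0 < Real.sinh (2*x) := Real.sinh_pos_iff.mpr (by linarith)
      positivity
    have hSmono : StrictMonoOn S (Set.Ici (0:ℝ)) := by
      apply strictMonoOn_of_deriv_pos (convex_Ici 0)
      · exact (Differentiable.continuous fun x => (hSderiv x).differentiableAt).continuousOn
      · intro x hx
        rw [interior_Ici, Set.mem_Ioi] at hx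
        rw [(hSderiv x).deriv]
        exact hgpos x hx
    have hSpos : ∀ x : ℝ, 0 < x → 0 < S x := by
      intro x hx
      have := hSmono Set.self_mem_Ici (Set.mem_Ici.mpr hx.le) hx
      rwa [hS0] at this
    -- sinh x = x * σ x with σ analytic at 0
    have hsinha : AnalyticAt ℝ Real.sinh 0 := (Real.contDiff_sinh (n := ω)).contDiffAt.analyticAt
    set σ : ℝ → ℝ := dslope Real.sinh 0 with hσdef
    have hσ0 : σ 0 = 1 := by rw [hσdef, dslope_same, Real.deriv_sinh, Real.cosh_zero]
    have hσsm : ContDiff ℝ ∞ σ := by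
      have he : σ = fun x => ∫ s in (0:ℝ)..1, Real.cosh (s * x) := by
        funext x
        by_cases hx : x = 0
        · subst hx; simp [hσ0]
        · have h1 := ftc_scale (fun y => Real.hasDerivAt_sinh y) Real.continuous_cosh x
          rw [intervalIntegral.integral_const_mul] at h1
          rw [hσdef, dslope_of_ne _ hx, slope_def_field, h1, sub_zero]
          field_simp
      rw [he]
      exact param_smooth (K := fun p => Real.cosh (p.1 * p.2))
        (Real.contDiff_cosh.comp (contDiff_fst.mul contDiff_snd))
    have hsσ : ∀ x : ℝ, Real.sinh x = x * σ x := by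
      intro x
      have h1 := sub_smul_dslope Real.sinh 0 x
      rw [sub_zero, Real.sinh_zero, sub_zero, smul_eq_mul] at h1
      exact h1.symm
    set G : ℝ → ℝ := fun x => Real.exp (-(v x)) * (σ x ^ n₁ * (2 * σ (2*x)) ^ n₂) with hGdef
    have hgG : ∀ x, g x = x ^ m * G x := by
      intro x
      have e1 : Real.sinh x ^ n₁ = x ^ n₁ * σ x ^ n₁ := by rw [hsσ x, mul_pow]
      have e2 : Real.sinh (2*x) ^ n₂ = x ^ n₂ * (2 * σ (2*x)) ^ n₂ := by
        rw [hsσ (2*x), show 2*x*σ (2*x) = x * (2 * σ (2*x)) from by ring, mul_pow]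
      show Real.exp (-(v x)) * (Real.sinh x ^ n₁ * Real.sinh (2*x) ^ n₂)
          = x ^ m * (Real.exp (-(v x)) * (σ x ^ n₁ * (2 * σ (2*x)) ^ n₂))
      rw [e1, e2, hm, pow_add]
      ring
    have hσc : ContinuousAt σ 0 := hσsm.continuous.continuousAt
    have hσ2c : ContinuousAt (fun x : ℝ => σ (2*x)) 0 := by
      have h2 : ContinuousAt (fun x : ℝ => 2*x) 0 := (continuous_const.mul continuous_id).continuousAt
      have h3 : ContinuousAt σ ((fun x : ℝ => 2*x) 0) := by simpa using hσc
      exact h3.comp h2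
    have hGc : ContinuousAt G 0 := by
      apply ContinuousAt.mul
      · exact (Real.continuous_exp.continuousAt).comp (hv.continuous.neg.continuousAt)
      · exact (hσc.pow n₁).mul ((continuousAt_const.mul hσ2c).pow n₂)
    have hG0 : G 0 ≠ 0 := by
      have hG0eq : G 0 = Real.exp (-(v 0)) * (1 ^ n₁ * (2 * 1) ^ n₂) := by
        show Real.exp (-(v 0)) * (σ 0 ^ n₁ * (2 * σ (2*0)) ^ n₂) = _
        norm_num [hσ0]
      rw [hG0eq]
      positivity
    -- compare orders : n = m + 1
    have hGsm : ContDiff ℝ ∞ G :=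
      (Real.contDiff_exp.comp hv.neg).mul ((hσsm.pow n₁).mul
        ((contDiff_const.mul (hσsm.comp (contDiff_const.mul contDiff_id))).pow n₂))
    set W : ℝ → ℝ := fun x => ∫ s in (0:ℝ)..1, s ^ m * G (s * x) with hWdef
    have hWsm : ContDiff ℝ ∞ W :=
      param_smooth (K := fun p => p.1 ^ m * G (p.1 * p.2))
        ((contDiff_fst.pow m).mul (hGsm.comp (contDiff_fst.mul contDiff_snd)))
    obtain ⟨n, hnm⟩ : ∃ n : ℕ, n = m + 1 := ⟨_, rfl⟩
    have hSW : ∀ z, S z = z ^ (m + 1) * W z := by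
      intro z
      have h1 := ftc_scale hSderiv hgω.continuous z
      rw [hS0, sub_zero] at h1
      simp only [hWdef]
      rw [h1, ← intervalIntegral.integral_const_mul]
      refine intervalIntegral.integral_congr (fun s _ => ?_)
      rw [hgG]
      ring
    have hfac' : ∀ᶠ z in 𝓝 (0:ℝ), S z = z ^ n * W z :=
      Filter.Eventually.of_forall fun z => by rw [hnm]; exact hSW z
    have hW0 : W 0 ≠ 0 := by
      have hW0eq : W 0 = ∫ s in (0:ℝ)..1, s ^ m * G 0 := by
        simp only [hWdef, mul_zero]
      rw [hW0eq, intervalIntegral.integral_mul_const, integral_pow]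
      have hm1 : ((m:ℝ) + 1) ≠ 0 := by positivity
      simp only [one_pow, ne_eq, Nat.add_eq_zero_iff, one_ne_zero, and_false,
        not_false_eq_true, zero_pow, sub_zero]
      exact mul_ne_zero (div_ne_zero one_ne_zero hm1) hG0
    have hWc : ContinuousAt W 0 := hWsm.continuous.continuousAt
    -- W 0 > 0
    have hW0pos : 0 < W 0 := by
      have hev : ∀ᶠ x in 𝓝[>] (0:ℝ), 0 ≤ W x := by
        filter_upwards [hfac'.filter_mono nhdsWithin_le_nhds, self_mem_nhdsWithin] with x hx hx0
        have hx0' : (0:ℝ) < x := hx0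
        have hxn : 0 < x ^ n := pow_pos hx0' n
        nlinarith [hSpos x hx0']
      have hlim : Tendsto W (𝓝[>] (0:ℝ)) (𝓝 (W 0)) := hWc.continuousWithinAt.tendsto
      have hge : 0 ≤ W 0 := ge_of_tendsto hlim hev
      exact lt_of_le_of_ne hge (Ne.symm hW0)
    -- R 0 > 0
    have hRc : ContinuousAt R 0 := hRω.continuous.continuousAt
    have hRhpos : ∀ x : ℝ, 0 < x → 0 < R (h x) := by
      intro x hx
      have h1 : 0 < S x := hSpos x hx
      have h2 : S x = (h x) ^ (m+1) * R (h x) := hAfact (h x)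
      have h3 : 0 < h x := hpos x hx
      nlinarith [pow_pos h3 (m+1)]
    have hhc0 : Tendsto h (𝓝 (0:ℝ)) (𝓝 (0:ℝ)) := by
      have := (hdh 0).continuousAt
      rwa [ContinuousAt, h0] at this
    have hR0pos : 0 < R 0 := by
      have hlim : Tendsto (fun x => R (h x)) (𝓝[>] (0:ℝ)) (𝓝 (R 0)) :=
        (hRc.tendsto.comp hhc0).mono_left nhdsWithin_le_nhds
      have hge : 0 ≤ R 0 := ge_of_tendsto hlim
        (by filter_upwards [self_mem_nhdsWithin] with x hx; exact (hRhpos x hx).le)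
      exact lt_of_le_of_ne hge (Ne.symm hR0ne)
    -- the root functions
    set α : ℝ := 1 / ((m:ℝ) + 1) with hαdef
    set Φ : ℝ → ℝ := fun y => y * R y ^ α with hΦdef
    set Ψ : ℝ → ℝ := fun x => x * W x ^ α with hΨdef
    have hΦc : ContDiffAt ℝ ∞ Φ 0 := contDiffAt_id.mul (contDiffAt_rpow_comp hRω.contDiffAt hR0pos)
    have hΨc : ContDiffAt ℝ ∞ Ψ 0 := contDiffAt_id.mul (contDiffAt_rpow_comp hWsm.contDiffAt hW0pos)
    have hρd : HasDerivAt (fun y : ℝ => R y ^ α) (deriv (fun y : ℝ => R y ^ α) 0) 0 :=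
      (((contDiffAt_rpow_comp hRω.contDiffAt hR0pos)).differentiableAt (by simp)).hasDerivAt
    have hΦd : HasDerivAt Φ (R 0 ^ α) 0 := by
      have hid : HasDerivAt (fun y : ℝ => y) 1 0 := hasDerivAt_id 0
      have := hid.fun_mul hρd
      simpa using this
    have hΦder_ne : R 0 ^ α ≠ 0 := (Real.rpow_pos_of_pos hR0pos α).ne'
    obtain ⟨finv, hfinv, hleft⟩ := analytic_local_inverse hΦc hΦder_ne hΦd
    have hΦ0 : Φ 0 = 0 := by rw [hΦdef]; simp
    have hΨ0 : Ψ 0 = 0 := by rw [hΨdef]; simp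
    -- key identity Φ (h x) = Ψ x near 0
    have hRh_ev : ∀ᶠ x in 𝓝 (0:ℝ), 0 < R (h x) :=
      hhc0.eventually (hRc.tendsto.eventually (eventually_gt_nhds hR0pos))
    have hW_ev : ∀ᶠ x in 𝓝 (0:ℝ), 0 < W x := hWc.tendsto.eventually (eventually_gt_nhds hW0pos)
    have hfacm : ∀ᶠ z in 𝓝 (0:ℝ), S z = z ^ (m+1) * W z := by rw [← hnm]; exact hfac'
    have hmne : ((m:ℝ) + 1) ≠ 0 := by positivity
    have hkey : ∀ᶠ x in 𝓝 (0:ℝ), Φ (h x) = Ψ x := by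
      filter_upwards [hRh_ev, hW_ev, hfacm] with x hRhx hWx hSx
      have hsign : (0 ≤ h x ↔ 0 ≤ x) := by
        constructor
        · intro hhx
          by_contra hxneg
          push_neg at hxneg
          have hlt := hmono (Set.mem_univ x) (Set.mem_univ 0) hxneg
          rw [h0] at hlt
          linarith
        · intro hx0
          rcases eq_or_lt_of_le hx0 with he | hlt
          · rw [← he, h0]
          · exact (hpos x hlt).le
      have e1 : (R (h x) ^ α) ^ (m+1) = R (h x) := by
        rw [← Real.rpow_natCast (R (h x) ^ α) (m+1), ← Real.rpow_mul hRhx.le]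
        rw [hαdef]
        push_cast
        rw [one_div, inv_mul_cancel₀ hmne, Real.rpow_one]
      have e2 : (W x ^ α) ^ (m+1) = W x := by
        rw [← Real.rpow_natCast (W x ^ α) (m+1), ← Real.rpow_mul hWx.le]
        rw [hαdef]
        push_cast
        rw [one_div, inv_mul_cancel₀ hmne, Real.rpow_one]
      have hpow : (Φ (h x)) ^ (m+1) = (Ψ x) ^ (m+1) := by
        calc (Φ (h x)) ^ (m+1) = (h x) ^ (m+1) * R (h x) := by
              show (h x * R (h x) ^ α) ^ (m+1) = _
              rw [mul_pow, e1]
          _ = A (h x) := (hAfact (h x)).symm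
          _ = S x := rfl
          _ = x ^ (m+1) * W x := hSx
          _ = (Ψ x) ^ (m+1) := by
              show _ = (x * W x ^ α) ^ (m+1)
              rw [mul_pow, e2]
      apply eq_of_pow_eq_sign (Nat.succ_ne_zero m) hpow
      have s1 : (0 ≤ Φ (h x) ↔ 0 ≤ h x) := by
        show 0 ≤ h x * R (h x) ^ α ↔ _
        exact mul_nonneg_iff_of_pos_right (Real.rpow_pos_of_pos hRhx α)
      have s2 : (0 ≤ Ψ x ↔ 0 ≤ x) := by
        show 0 ≤ x * W x ^ α ↔ _
        exact mul_nonneg_iff_of_pos_right (Real.rpow_pos_of_pos hWx α)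
      rw [s1, s2]
      exact hsign
    -- conclude
    have hhev : ∀ᶠ x in 𝓝 (0:ℝ), finv (Ψ x) = h x := by
      have h2 : ∀ᶠ x in 𝓝 (0:ℝ), finv (Φ (h x)) = h x := hhc0.eventually hleft
      filter_upwards [h2, hkey] with x h2x hkx
      rw [← hkx]
      exact h2x
    have hhana : ContDiffAt ℝ ∞ h 0 := by
      have hfinv' : ContDiffAt ℝ ∞ finv (Ψ 0) := by rwa [hΨ0, ← hΦ0]
      have hcomp : ContDiffAt ℝ ∞ (fun x => finv (Ψ x)) 0 := ContDiffAt.comp 0 hfinv' hΨc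
      exact hcomp.congr_of_eventuallyEq (hhev.mono fun x hx => hx.symm)
    exact hhana
end

section
/- Let F(w) = ((k+1)!·(Q(λ) − Q(λ−w)) / ((−1)^k P^{(k)}(λ)))^{1/(k+1)} for w ≥ 0, where P is a polynomial with P(λ) = ... = P^{(k−1)}(λ) = 0 and (−1)^k P^{(k)}(λ) > 0, and Q is a primitive of P. Then F(w) = w + A₂w² + O(w³) as w → 0⁺, with A₂ = −P^{(k+1)}(λ)/((k+1)(k+2)P^{(k)}(λ)); in particular F is invertible near 0 with inverse G(s) = s + B₂s² + O(s³), B₂ = −A₂. -/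
/-!
Put `S(w) = P(λ - w)`. Since `P` vanishes to order `k` at `λ`, the polynomial primitive of `S`
vanishing at `0`, which is `w ↦ Q(λ) - Q(λ - w)`, is `w^(k+1) r(w)` with `r(0)`, `r'(0)` read
off from `P^(k)(λ)`, `P^(k+1)(λ)`. Normalising `r` to a polynomial `p` with `p(0) = 1` gives
`F(w) = w · p(w)^(1/(k+1))` for small `w ≥ 0`, and the second-order Taylor expansion of
`p^(1/(k+1))` at `0` gives the expansion of `F`. The function `w ↦ w · p(w)^(1/(k+1))` has strict
derivative `1` at `0`; its local inverse `G` inverts `F` on some `[0, ε)`, and substituting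
`w = G(s)` into the expansion of `F` yields that of `G`.
-/

open Asymptotics Filter Topology Polynomial

theorem isBigO_sub_sub_smul_sq_of_hasDerivAt {E : Type*} [NormedAddCommGroup E] [NormedSpace ℝ E]
    {f f' : ℝ → E} {x₀ : ℝ} (hf : ∀ᶠ x in 𝓝 x₀, HasDerivAt f (f' x) x)
    (hf' : DifferentiableAt ℝ f' x₀) :
    (fun x => f x - f x₀ - (x - x₀) • f' x₀) =O[𝓝 x₀] fun x => (x - x₀) ^ 2 := by
  obtain ⟨ε, hε, hball⟩ := Metric.eventually_nhds_iff_ball.1 hf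
  set f'' := deriv f' x₀
  set φ : ℝ → E := fun x => f x - (x - x₀) • f' x₀ - ((x - x₀) ^ 2 / 2) • f''
  have hφ : ∀ x ∈ Metric.ball x₀ ε,
      HasDerivWithinAt φ (f' x - f' x₀ - (x - x₀) • f'') (Metric.ball x₀ ε) x := by
    intro x hx
    have h1 := ((hasDerivAt_id x).sub_const x₀).smul_const (f' x₀)
    have h2 := (((hasDerivAt_id x).sub_const x₀).pow 2).div_const 2 |>.smul_const f''
    convert! ((hball x hx).sub h1).sub h2 |>.hasDerivWithinAt using 1
    simp only [id, Nat.cast_ofNat, one_smul]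
    module
  have hlittle : (fun x => φ x - φ x₀) =o[𝓝 x₀] fun x => (x - x₀) ^ 2 := by
    have := (convex_ball x₀ ε).isLittleO_pow_succ_real (Metric.mem_ball_self hε) hφ
      (n := 1) (by simpa using hf'.hasDerivAt.isLittleO.mono nhdsWithin_le_nhds)
    rwa [nhdsWithin_eq_nhds.2 (Metric.ball_mem_nhds x₀ hε)] at this
  have hsq : (fun x => ((x - x₀) ^ 2 / 2) • f'') =O[𝓝 x₀] fun x => (x - x₀) ^ 2 :=
    .of_bound ‖f''‖ (.of_forall fun x => by
      rw [norm_smul, norm_div, Real.norm_ofNat, mul_comm]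
      gcongr; linarith [norm_nonneg ((x - x₀) ^ 2)])
  refine (hlittle.isBigO.add hsq).congr_left fun x => ?_
  simp only [φ, sub_self, zero_pow two_ne_zero, zero_div, zero_smul, sub_zero]
  abel

theorem HasStrictDerivAt.localInverse_sub_isBigO {f : ℝ → ℝ} {a : ℝ}
    (hf : HasStrictDerivAt f 1 0) (hf0 : f 0 = 0)
    (hexp : (fun w => f w - (w + a * w ^ 2)) =O[𝓝 0] fun w => w ^ 3) :
    (fun s => hf.localInverse f 1 0 one_ne_zero s - (s + -a * s ^ 2)) =O[𝓝 0]
      fun s => s ^ 3 := by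
  set g := hf.localInverse f 1 0 one_ne_zero
  have hg : HasStrictDerivAt g 1 0 := by
    simpa [hf0] using hf.to_localInverse one_ne_zero
  have hg0 : g 0 = 0 := by
    simpa [hf0] using (hf.eventually_left_inverse one_ne_zero).self_of_nhds
  have hgO : g =O[𝓝 0] fun s => s := by
    simpa [hg0] using hg.hasDerivAt.isBigO_sub
  have hfg : ∀ᶠ s in 𝓝 0, f (g s) = s := by
    simpa [hf0] using hf.eventually_right_inverse one_ne_zero
  have hgt : Tendsto g (𝓝 0) (𝓝 0) := by
    simpa [hg0] using hg.hasDerivAt.continuousAt.tendsto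
  have hcube : (fun s => s - g s - a * g s ^ 2) =O[𝓝 0] fun s => s ^ 3 := by
    refine ((hexp.comp_tendsto hgt).trans (hgO.pow 3)).congr' ?_ (.of_forall fun _ => rfl)
    filter_upwards [hfg] with s hs
    simp only [Function.comp, hs]; ring
  have hdiff : (fun s => g s - s) =O[𝓝 0] fun s => s ^ 2 :=
    ((hcube.trans (isLittleO_pow_pow (by norm_num)).isBigO).neg_left.sub
      ((hgO.pow 2).const_mul_left a)).congr_left fun s => by ring
  have hsum : (fun s => g s + s) =O[𝓝 0] fun s => s := hgO.add (isBigO_refl _ _)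
  refine (hcube.neg_left.sub (((hdiff.mul hsum).const_mul_left a).congr_right fun s => by ring))
    |>.congr_left fun s => by ring

theorem Polynomial.eventually_hasDerivAt_eval_rpow (p : ℝ[X]) (α : ℝ) {x₀ : ℝ}
    (hp : p.eval x₀ ≠ 0) : ∀ᶠ x in 𝓝 x₀,
      HasDerivAt (fun w => p.eval w ^ α) (p.derivative.eval x * α * p.eval x ^ (α - 1)) x :=
  (p.continuous.continuousAt.eventually_ne hp).mono fun x hx =>
    (p.hasDerivAt x).rpow_const (.inl hx)

theorem Polynomial.hasStrictDerivAt_mul_eval_rpow (p : ℝ[X]) (α : ℝ) (hp : p.eval 0 = 1) :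
    HasStrictDerivAt (fun w => w * p.eval w ^ α) 1 0 := by
  have hg := hasStrictDerivAt_of_hasDerivAt_of_continuousAt
    (p.eventually_hasDerivAt_eval_rpow α (hp ▸ one_ne_zero)) (by fun_prop (disch := simp [hp]))
  simpa [hp] using (hasStrictDerivAt_id 0).fun_mul hg

theorem Polynomial.isBigO_mul_eval_rpow_sub (p : ℝ[X]) (α : ℝ) (hp : p.eval 0 = 1) :
    (fun w => w * p.eval w ^ α - (w + α * p.derivative.eval 0 * w ^ 2)) =O[𝓝 0]
      fun w => w ^ 3 := by
  have hg := isBigO_sub_sub_smul_sq_of_hasDerivAt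
    (p.eventually_hasDerivAt_eval_rpow α (hp ▸ one_ne_zero)) (by fun_prop (disch := simp [hp]))
  have := (isBigO_refl (fun w : ℝ => w) (𝓝 0)).mul hg
  simp only [hp, Real.one_rpow, mul_one, sub_zero, smul_eq_mul] at this
  exact this.congr (fun w => by ring) (fun w => by ring)

theorem Real.pow_succ_mul_rpow_one_div {w c : ℝ} (hw : 0 ≤ w) (hc : 0 ≤ c) (n : ℕ) :
    (w ^ (n + 1) * c) ^ (1 / ((n : ℝ) + 1)) = w * c ^ (1 / ((n : ℝ) + 1)) := by
  rw [Real.mul_rpow (by positivity) hc, one_div, ← Nat.cast_succ,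
    Real.pow_rpow_inv_natCast hw n.succ_ne_zero]

namespace Polynomial

variable {K : Type*} [Field K]

noncomputable def antiderivative (p : K[X]) : K[X] :=
  ∑ n ∈ Finset.range (p.natDegree + 1), C (p.coeff n / (n + 1)) * X ^ (n + 1)

theorem derivative_antiderivative [CharZero K] (p : K[X]) : derivative (antiderivative p) = p := by
  rw [antiderivative, derivative_sum]
  conv_rhs => rw [p.as_sum_range_C_mul_X_pow]
  refine Finset.sum_congr rfl fun n _ => ?_
  rw [derivative_C_mul_X_pow]
  push_cast
  congr 1
  field_simp

theorem coeff_antiderivative_zero (p : K[X]) : (antiderivative p).coeff 0 = 0 := by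
  simp [antiderivative]

theorem coeff_antiderivative_succ (p : K[X]) (n : ℕ) :
    (antiderivative p).coeff (n + 1) = p.coeff n / (n + 1) := by
  simp only [antiderivative, finsetSum_coeff, coeff_C_mul_X_pow, add_left_inj,
    Finset.sum_ite_eq, Finset.mem_range]
  split_ifs with h
  · rfl
  · rw [coeff_eq_zero_of_natDegree_lt (by omega), zero_div]

theorem iterate_derivative_comp_C_sub_X {R : Type*} [CommRing R] (p : R[X]) (a : R) (k : ℕ) :
    derivative^[k] (p.comp (C a - X)) = (-1) ^ k * (derivative^[k] p).comp (C a - X) := by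
  induction k generalizing p with
  | zero => simp
  | succ k ih => simp [ih (derivative p), derivative_comp, pow_succ]

theorem factorial_mul_coeff_comp_C_sub_X {R : Type*} [CommRing R] (p : R[X]) (a : R) (k : ℕ) :
    (k.factorial : R) * (p.comp (C a - X)).coeff k = (-1) ^ k * (derivative^[k] p).eval a := by
  have := congr_arg (coeff · 0) (iterate_derivative_comp_C_sub_X p a k)
  simp only [coeff_iterate_derivative, zero_add, Nat.descFactorial_self, nsmul_eq_mul] at this
  rw [this, coeff_zero_eq_eval_zero]
  simp [eval_comp]

end Polynomial

theorem sub_apply_sub_eq_eval_antiderivative {P : ℝ[X]} {Q : ℝ → ℝ}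
    (hQ : ∀ y, HasDerivAt Q (P.eval y) y) (a w : ℝ) :
    Q a - Q (a - w) = (antiderivative (P.comp (C a - X))).eval w := by
  have hderiv : ∀ w, HasDerivAt (fun w => Q a - Q (a - w)) ((P.comp (C a - X)).eval w) w := by
    intro w
    simpa [eval_comp] using ((hQ (a - w)).comp w ((hasDerivAt_id w).const_sub a)).const_sub (Q a)
  have hR : ∀ w, HasDerivAt (fun w => (antiderivative (P.comp (C a - X))).eval w)
      ((P.comp (C a - X)).eval w) w := fun w => by
    simpa only [derivative_antiderivative] using (antiderivative _).hasDerivAt w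
  refine congrFun (eq_of_fderiv_eq (fun w => (hderiv w).differentiableAt)
    (fun w => (hR w).differentiableAt) (fun w => ?_) 0
    (by simp [← coeff_zero_eq_eval_zero, coeff_antiderivative_zero])) w
  rw [(hderiv w).hasFDerivAt.fderiv, (hR w).hasFDerivAt.fderiv]

theorem exists_sub_apply_sub_eq_pow_mul_eval {P : ℝ[X]} {Q : ℝ → ℝ} {a : ℝ} {k : ℕ}
    (hQ : ∀ y, HasDerivAt Q (P.eval y) y) (hvanish : ∀ j < k, (derivative^[j] P).eval a = 0) :
    ∃ r : ℝ[X], (∀ w, Q a - Q (a - w) = w ^ (k + 1) * r.eval w) ∧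
      ((k + 1).factorial : ℝ) * r.coeff 0 = (-1) ^ k * (derivative^[k] P).eval a ∧
      ((k + 2).factorial : ℝ) * r.coeff 1 = (-1) ^ (k + 1) * (derivative^[k + 1] P).eval a := by
  set R := antiderivative (P.comp (C a - X))
  have hcoeff (j : ℕ) :
      ((j + 1).factorial : ℝ) * R.coeff (j + 1) = (-1) ^ j * (derivative^[j] P).eval a := by
    rw [coeff_antiderivative_succ, ← factorial_mul_coeff_comp_C_sub_X, Nat.factorial_succ]
    push_cast
    field_simp
  obtain ⟨r, hr⟩ : X ^ (k + 1) ∣ R := X_pow_dvd_iff.2 fun d hd => by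
    cases d with
    | zero => exact coeff_antiderivative_zero _
    | succ j =>
      have := hcoeff j
      rw [hvanish j (by omega), mul_zero] at this
      exact (mul_eq_zero.1 this).resolve_left (by positivity)
  have hrcoeff (j : ℕ) : r.coeff j = R.coeff (j + (k + 1)) := by
    rw [hr, mul_comm, coeff_mul_X_pow]
  refine ⟨r, fun w => ?_, ?_, ?_⟩
  · rw [sub_apply_sub_eq_eval_antiderivative hQ, show antiderivative _ = R from rfl, hr, eval_mul,
      eval_pow, eval_X]
  · rw [hrcoeff, zero_add]
    exact hcoeff k
  · rw [hrcoeff, add_comm 1]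
    exact hcoeff (k + 1)

/-- Expansion of F(w) = ((k+1)!(Q(λ)−Q(λ−w))/((−1)^k P^{(k)}(λ)))^{1/(k+1)}:
F(w) = w + A₂w² + O(w³) as w → 0⁺ with A₂ = −P^{(k+1)}(λ)/((k+1)(k+2)P^{(k)}(λ)),
and F is invertible near 0 with inverse G(s) = s + B₂s² + O(s³), B₂ = −A₂. -/
theorem stmt_16 (k : ℕ) (lam : ℝ) (P : Polynomial ℝ) (Q F : ℝ → ℝ)
    (hvanish : ∀ j < k, ((Polynomial.derivative^[j]) P).eval lam = 0)
    (hk : 0 < (-1 : ℝ) ^ k * ((Polynomial.derivative^[k]) P).eval lam)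
    (hQ : ∀ y, HasDerivAt Q (P.eval y) y)
    (hF : ∀ w ≥ (0:ℝ), F w
      = (((k + 1).factorial : ℝ) * (Q lam - Q (lam - w))
          / ((-1 : ℝ) ^ k * ((Polynomial.derivative^[k]) P).eval lam)) ^ ((1 : ℝ) / (k + 1))) :
    let A₂ : ℝ := -((Polynomial.derivative^[k + 1]) P).eval lam
        / (((k : ℝ) + 1) * ((k : ℝ) + 2) * ((Polynomial.derivative^[k]) P).eval lam)
    ((fun w => F w - (w + A₂ * w ^ 2)) =O[nhdsWithin 0 (Set.Ioi 0)] fun w => w ^ 3) ∧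
    ∃ ε > (0:ℝ), ∃ G : ℝ → ℝ, (∀ w ∈ Set.Ico (0:ℝ) ε, G (F w) = w) ∧
      ((fun s => G s - (s + (-A₂) * s ^ 2)) =O[nhdsWithin 0 (Set.Ioi 0)] fun s => s ^ 3) := by
  intro A₂
  obtain ⟨r, hQr, hr0, hr1⟩ := exists_sub_apply_sub_eq_pow_mul_eval hQ hvanish
  set D := (-1 : ℝ) ^ k * (derivative^[k] P).eval lam
  set α : ℝ := 1 / (k + 1)
  set p : ℝ[X] := C ((k + 1).factorial / D) * r
  have hp0 : p.eval 0 = 1 := by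
    rw [eval_mul, eval_C, ← coeff_zero_eq_eval_zero, div_mul_eq_mul_div, hr0, div_self hk.ne']
  have hpA : α * p.derivative.eval 0 = A₂ := by
    have hPk : (derivative^[k] P).eval lam ≠ 0 := fun h => hk.ne' (by simp [D, h])
    rw [Nat.factorial_succ (k + 1)] at hr1
    push_cast at hr1
    simp only [p, derivative_mul, derivative_C, zero_mul, zero_add, eval_mul, eval_C,
      ← coeff_zero_eq_eval_zero, coeff_derivative, D, α, A₂]
    field_simp
    linear_combination hr1
  set f := fun w => w * p.eval w ^ α
  have hf := p.hasStrictDerivAt_mul_eval_rpow α hp0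
  have hexp := hpA ▸ p.isBigO_mul_eval_rpow_sub α hp0
  have hFf : ∀ᶠ w in 𝓝 0, 0 ≤ w → F w = f w := by
    filter_upwards [p.continuous.continuousAt.eventually (lt_mem_nhds (hp0 ▸ one_pos))]
      with w hpw hw
    rw [hF w hw, hQr, show f w = _ from Real.pow_succ_mul_rpow_one_div hw hpw.le k |>.symm]
    congr 1
    simp only [p, eval_mul, eval_C]
    ring
  obtain ⟨ε, hε, hball⟩ :=
    Metric.eventually_nhds_iff.1 (hFf.and (hf.eventually_left_inverse one_ne_zero))
  refine ⟨(hexp.mono nhdsWithin_le_nhds).congr' ?_ .rfl, ε, hε,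
    hf.localInverse f 1 0 one_ne_zero, fun w hw => ?_,
    (hf.localInverse_sub_isBigO (by simp) hexp).mono nhdsWithin_le_nhds⟩
  · filter_upwards [nhdsWithin_le_nhds hFf, self_mem_nhdsWithin] with w hFw hw
    rw [hFw (le_of_lt hw)]
  · obtain ⟨hFw, hGf⟩ := hball (by rw [Real.dist_0_eq_abs, abs_of_nonneg hw.1]; exact hw.2)
    rw [hFw hw.1, hGf]
end

section
/- For each of the parameter triples (m₁,m₂,m₃) ∈ {(2,2,0), (3,4,0), (4,4,1), (6,8,1)}, both inequalities hold: B((m₂+m₃)/2+1, m₁+1) > (m₂+2m₃)/(2m₁+m₂+2m₃)·B((m₂+m₃+1)/2, m₁+1) and B(m₁/2+1, m₂+m₃+1) > m₁/(m₁+m₂+2m₃)·B((m₁+1)/2, m₂+m₃+1), where B is the Euler beta function. -/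
/-!
For a natural number `n`, expanding `(1 - t) ^ n` binomially turns `B(a, n + 1)` into the
rational sum `∑ₖ (-1)ᵏ C(n, k) / (a + k)`. In all four cases the second argument of every beta
value is a natural number plus one, so each of the eight inequalities is a comparison of
explicit rational numbers.
-/

/-- The Euler beta function B(a,b) = ∫₀¹ t^{a-1}(1-t)^{b-1} dt. -/
noncomputable def eulerBeta (a b : ℝ) : ℝ :=
  ∫ t in (0:ℝ)..1, t ^ (a - 1) * (1 - t) ^ (b - 1)

open Finset

lemma eulerBeta_natCast_add_one {a : ℝ} (ha : 0 < a) (n : ℕ) :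
    eulerBeta a (n + 1) = ∑ k ∈ range (n + 1), (-1 : ℝ) ^ k * n.choose k / (a + k) := by
  have hbinomial : eulerBeta a (n + 1) = ∫ t in (0 : ℝ)..1,
      ∑ k ∈ range (n + 1), ((-1 : ℝ) ^ k * n.choose k) * t ^ (a - 1 + k) := by
    refine intervalIntegral.integral_congr_ae (Filter.Eventually.of_forall fun t ht => ?_)
    rw [Set.uIoc_of_le zero_le_one] at ht
    rw [add_sub_cancel_right, Real.rpow_natCast, sub_eq_neg_add 1 t, add_pow, mul_sum]
    refine sum_congr rfl fun k _ => ?_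
    rw [Real.rpow_add ht.1, Real.rpow_natCast, neg_pow]
    ring
  have hk : ∀ k : ℕ, -1 < a - 1 + k := fun k => by
    have := k.cast_nonneg (α := ℝ); linarith
  rw [hbinomial, intervalIntegral.integral_finsetSum
    fun k _ => (intervalIntegral.intervalIntegrable_rpow' (hk k)).const_mul _]
  refine sum_congr rfl fun k _ => ?_
  rw [intervalIntegral.integral_const_mul, integral_rpow (Or.inl (hk k)), Real.one_rpow,
    Real.zero_rpow (by linarith [hk k]), sub_zero]
  ring

lemma eulerBeta_ofNat {a : ℝ} (ha : 0 < a) (n : ℕ) [n.AtLeastTwo] :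
    eulerBeta a (no_index (OfNat.ofNat n : ℝ)) =
      ∑ k ∈ range n, (-1 : ℝ) ^ k * (n - 1).choose k / (a + k) := by
  have hn : n - 1 + 1 = n := Nat.sub_add_cancel Nat.AtLeastTwo.one_lt.le
  have := eulerBeta_natCast_add_one ha (n - 1)
  rwa [← Nat.cast_add_one, hn] at this

/-- Both barycenter conditions hold for the sporadic triples
(m₁,m₂,m₃) ∈ {(2,2,0), (3,4,0), (4,4,1), (6,8,1)}. -/
theorem stmt_19 (m₁ m₂ m₃ : ℝ)
    (h : (m₁, m₂, m₃) ∈ ({(2, 2, 0), (3, 4, 0), (4, 4, 1), (6, 8, 1)} : Set (ℝ × ℝ × ℝ))) :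
    (m₂ + 2 * m₃) / (2 * m₁ + m₂ + 2 * m₃) * eulerBeta ((m₂ + m₃ + 1) / 2) (m₁ + 1)
      < eulerBeta ((m₂ + m₃) / 2 + 1) (m₁ + 1) ∧
    m₁ / (m₁ + m₂ + 2 * m₃) * eulerBeta ((m₁ + 1) / 2) (m₂ + m₃ + 1)
      < eulerBeta (m₁ / 2 + 1) (m₂ + m₃ + 1) := by
  simp only [Set.mem_insert_iff, Set.mem_singleton_iff, Prod.mk.injEq] at h
  rcases h with ⟨rfl, rfl, rfl⟩ | ⟨rfl, rfl, rfl⟩ | ⟨rfl, rfl, rfl⟩ | ⟨rfl, rfl, rfl⟩ <;>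
    norm_num <;>
    simp (disch := positivity) only [eulerBeta_ofNat] <;>
    norm_num [sum_range_succ, Nat.choose]
end
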